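/- Time-ordered integral identity for divided differences of exponentials: for t > 0 and complex γ₁,...,γ_q, (i)^q ∫₀^t dt_q ∫₀^{t_q} dt_{q−1} ... ∫₀^{t₂} dt₁ e^{i(γ_q t_q + ... + γ₁ t₁)} = e^{it[x₀, x₁, ..., x_{q−1}, 0]}, where x_j = ∑_{k=j+1}^{q} γ_k and e^{it[·]} denotes the divided difference of x ↦ e^{ixt} at the indicated nodes. -/

import Mathlib

/-!
Induction on `q`. Peeling off the outermost integral gives
`i^{q+1} I_{q+1}(t) = ∫₀^t i e^{iγτ} (i^q I_q(τ)) dτ` with `γ` the outermost frequency; by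
induction the bracket is the divided difference at the tail sums of the remaining
frequencies, and the factor `e^{iγτ}` shifts all these nodes by `γ`, producing exactly the
first `q + 1` nodes `x₀, …, x_q` of the claim. It remains to see that a divided difference whose
last node is `0` satisfies `e^{it[w₀,…,w_q,0]} = ∫₀^t i e^{iτ[w₀,…,w_q]} dτ`. In the
Hermite–Genocchi form this follows by slicing the simplex `S_{q+1}` along its last coordinate
`1 - s` into the scaled simplices `s • S_q`, and substituting `τ = s t`.
-/
open MeasureTheory Complex

/-- The standard `q`-simplex `S_q = {u ∈ ℝ₊^q : ∑ₖ uₖ ≤ 1}`. -/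
def stdSimplexSet (q : ℕ) : Set (Fin q → ℝ) :=
  {u | (∀ k, 0 ≤ u k) ∧ ∑ k, u k ≤ 1}

/-- Divided difference of `x ↦ e^{ixt}` at the (possibly repeated) complex nodes
`w₀, …, w_q`, defined through the Hermite–Genocchi simplex integral (which is the
standard confluent/derivative extension for this entire function). -/
noncomputable def expDD (t : ℂ) {q : ℕ} (w : Fin (q + 1) → ℂ) : ℂ :=
  ∫ u in stdSimplexSet q,
    (Complex.I * t) ^ q *
      Complex.exp (Complex.I *
        ((1 - ∑ k, (u k : ℂ)) * w 0 + ∑ k, (u k : ℂ) * w k.succ) * t)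

/-- The iterated time-ordered integral
`∫₀^t dt_q e^{iγ_q t_q} ∫₀^{t_q} dt_{q-1} e^{iγ_{q-1} t_{q-1}} ⋯ ∫₀^{t₂} dt₁ e^{iγ₁ t₁}`,
the list giving the frequencies from the outermost variable inwards. -/
noncomputable def orderedInt : List ℂ → ℝ → ℂ
  | [], _ => 1
  | γ :: rest, t => ∫ τ in (0 : ℝ)..t, Complex.exp (Complex.I * γ * τ) * orderedInt rest τ

open scoped Pointwise

lemma isClosed_stdSimplexSet (q : ℕ) : IsClosed (stdSimplexSet q) :=
  (isClosed_le continuous_const continuous_id).inter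
    (isClosed_le (continuous_finsetSum _ fun k _ => continuous_apply k) continuous_const)

lemma measurableSet_stdSimplexSet (q : ℕ) : MeasurableSet (stdSimplexSet q) :=
  (isClosed_stdSimplexSet q).measurableSet

lemma isCompact_stdSimplexSet (q : ℕ) : IsCompact (stdSimplexSet q) := by
  refine (isCompact_univ_pi fun _ => isCompact_Icc (a := (0 : ℝ)) (b := 1)).of_isClosed_subset
    (isClosed_stdSimplexSet q) fun u hu k _ => ⟨hu.1 k, ?_⟩
  exact (Finset.single_le_sum (fun j _ => hu.1 j) (Finset.mem_univ k)).trans hu.2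

lemma snoc_mem_stdSimplexSet_iff {q : ℕ} {v : Fin q → ℝ} {x : ℝ} :
    (Fin.snoc v x : Fin (q + 1) → ℝ) ∈ stdSimplexSet (q + 1) ↔
      0 ≤ x ∧ (∀ k, 0 ≤ v k) ∧ ∑ k, v k ≤ 1 - x := by
  simp only [stdSimplexSet, Set.mem_ofPred_eq, Fin.forall_fin_succ', Fin.sum_univ_castSucc,
    Fin.snoc_castSucc, Fin.snoc_last]
  constructor
  · rintro ⟨⟨hv, hx⟩, hsum⟩
    exact ⟨hx, hv, by linarith⟩
  · rintro ⟨hx, hv, hsum⟩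
    exact ⟨⟨hv, hx⟩, by linarith⟩

lemma preimage_snoc_stdSimplexSet {q : ℕ} {s : ℝ} (hs₀ : 0 < s) (hs₁ : s ≤ 1) :
    (fun v : Fin q → ℝ => (Fin.snoc v (1 - s) : Fin (q + 1) → ℝ)) ⁻¹' stdSimplexSet (q + 1) =
      s • stdSimplexSet q := by
  ext v
  rw [Set.mem_preimage, snoc_mem_stdSimplexSet_iff, Set.mem_smul_set_iff_inv_smul_mem₀ hs₀.ne']
  simp only [stdSimplexSet, Set.mem_ofPred_eq, Pi.smul_apply, smul_eq_mul, ← Finset.mul_sum,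
    inv_mul_le_iff₀ hs₀, mul_one, sub_sub_cancel, sub_nonneg, hs₁, true_and]
  simp only [inv_pos.2 hs₀, mul_nonneg_iff_of_pos_left]

section Integral

variable {E : Type*} [NormedAddCommGroup E] [NormedSpace ℝ E]

lemma integral_eq_integral_integral_snoc {q : ℕ} {F : (Fin (q + 1) → ℝ) → E}
    (hF : Integrable F) :
    ∫ x, F x = ∫ x : ℝ, ∫ v : Fin q → ℝ, F (Fin.snoc v x) := by
  have he := (volume_preserving_piFinSuccAbove (fun _ : Fin (q + 1) => ℝ) (Fin.last q)).symm
  rw [← he.integral_comp' F]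
  have hF' := (he.integrable_comp_emb (MeasurableEquiv.measurableEmbedding _)).2 hF
  rw [Measure.volume_eq_prod] at hF' ⊢
  refine (integral_prod _ hF').trans ?_
  simp [MeasurableEquiv.piFinSuccAbove_symm_apply, Fin.snocEquiv]

lemma setIntegral_stdSimplexSet_succ {q : ℕ} {G : (Fin (q + 1) → ℝ) → E}
    (hG : IntegrableOn G (stdSimplexSet (q + 1))) :
    ∫ u in stdSimplexSet (q + 1), G u =
      ∫ s in (0 : ℝ)..1, (s ^ q) • ∫ u in stdSimplexSet q, G (Fin.snoc (s • u) (1 - s)) := by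
  have hS := measurableSet_stdSimplexSet (q + 1)
  set g : ℝ → E := fun x => ∫ v : Fin q → ℝ, (stdSimplexSet (q + 1)).indicator G (Fin.snoc v x)
  have hg : ∀ x ∉ Set.Icc (0 : ℝ) 1, g x = 0 := by
    refine fun x hx => integral_eq_zero_of_ae (.of_forall fun v => Set.indicator_of_notMem ?_ _)
    rw [snoc_mem_stdSimplexSet_iff]
    rintro ⟨hx₀, hv, hsum⟩
    exact hx ⟨hx₀, by linarith [Finset.sum_nonneg fun k (_ : k ∈ Finset.univ) => hv k]⟩
  have hreflect : ∫ x in (0 : ℝ)..1, g x = ∫ s in (0 : ℝ)..1, g (1 - s) := by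
    simp [intervalIntegral.integral_comp_sub_left g 1]
  rw [← integral_indicator hS,
    integral_eq_integral_integral_snoc ((integrable_indicator_iff hS).2 hG),
    ← setIntegral_eq_integral_of_forall_compl_eq_zero hg, integral_Icc_eq_integral_Ioc,
    ← intervalIntegral.integral_of_le zero_le_one, hreflect]
  refine intervalIntegral.integral_congr_ae (.of_forall fun s hs => ?_)
  rw [Set.uIoc_of_le zero_le_one] at hs
  have hslice : ∀ v : Fin q → ℝ, (stdSimplexSet (q + 1)).indicator G (Fin.snoc v (1 - s)) =
      (s • stdSimplexSet q).indicator (fun v => G (Fin.snoc v (1 - s))) v := fun v => by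
    rw [← preimage_snoc_stdSimplexSet hs.1 hs.2]
    exact (Set.indicator_comp_right
      (fun v : Fin q → ℝ => (Fin.snoc v (1 - s) : Fin (q + 1) → ℝ))).symm
  simp only [g, hslice]
  rw [integral_indicator ((measurableSet_stdSimplexSet q).const_smul₀ s),
    Measure.setIntegral_comp_smul_of_pos volume (fun v => G (Fin.snoc v (1 - s))) _ hs.1,
    Module.finrank_fin_fun, smul_inv_smul₀]
  exact (pow_pos hs.1 q).ne'

end Integral

def simplexPoint {q : ℕ} (w : Fin (q + 1) → ℂ) (u : Fin q → ℝ) : ℂ :=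
  (1 - ∑ k, (u k : ℂ)) * w 0 + ∑ k, (u k : ℂ) * w k.succ

lemma expDD_eq {q : ℕ} (t : ℂ) (w : Fin (q + 1) → ℂ) :
    expDD t w = ∫ u in stdSimplexSet q, (I * t) ^ q * exp (I * simplexPoint w u * t) :=
  rfl

lemma continuous_simplexPoint {q : ℕ} (w : Fin (q + 1) → ℂ) : Continuous (simplexPoint w) := by
  unfold simplexPoint
  fun_prop

lemma simplexPoint_add_const {q : ℕ} (w : Fin (q + 1) → ℂ) (c : ℂ) (u : Fin q → ℝ) :
    simplexPoint (fun j => w j + c) u = simplexPoint w u + c := by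
  simp only [simplexPoint, mul_add, Finset.sum_add_distrib, ← Finset.sum_mul]
  ring

lemma simplexPoint_snoc {q : ℕ} (w : Fin (q + 2) → ℂ) (u : Fin q → ℝ) (s : ℝ) :
    simplexPoint w (Fin.snoc (s • u) (1 - s)) =
      s * simplexPoint (fun j => w j.castSucc) u + (1 - s) * w (Fin.last _) := by
  simp only [simplexPoint, Fin.sum_univ_castSucc, Fin.snoc_castSucc, Fin.snoc_last,
    Pi.smul_apply, smul_eq_mul, Fin.succ_last, ← Fin.succ_castSucc, Fin.castSucc_zero]
  push_cast
  simp only [mul_assoc, ← Finset.mul_sum]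
  ring

lemma expDD_fin_one (t : ℂ) (w : Fin 1 → ℂ) : expDD t w = exp (I * w 0 * t) := by
  have : stdSimplexSet 0 = Set.univ := by ext u; simp [stdSimplexSet]
  simp [expDD_eq, simplexPoint, this, Measure.real, volume_pi]

lemma expDD_add_const {q : ℕ} (t : ℂ) (w : Fin (q + 1) → ℂ) (c : ℂ) :
    expDD t (fun j => w j + c) = exp (I * c * t) * expDD t w := by
  simp only [expDD_eq, ← integral_const_mul, simplexPoint_add_const, add_mul, mul_add,
    exp_add]
  congr 1 with u
  ring

lemma expDD_eq_integral_expDD_castSucc {q : ℕ} (t : ℝ) (w : Fin (q + 2) → ℂ)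
    (hw : w (Fin.last _) = 0) :
    expDD t w = ∫ τ in (0 : ℝ)..t, I * expDD τ (fun j => w j.castSucc) := by
  have hcont : Continuous fun u => (I * t) ^ (q + 1) * exp (I * simplexPoint w u * t) := by
    have := continuous_simplexPoint w
    fun_prop
  rw [expDD_eq, setIntegral_stdSimplexSet_succ (hcont.continuousOn.integrableOn_compact
      (isCompact_stdSimplexSet _))]
  have hscale := intervalIntegral.smul_integral_comp_mul_left (a := 0) (b := 1)
    (fun τ : ℝ => I * expDD τ (fun j => w j.castSucc)) t
  rw [mul_zero, mul_one] at hscale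
  rw [← hscale, ← intervalIntegral.integral_smul]
  refine intervalIntegral.integral_congr fun s _ => ?_
  simp only [expDD_eq, simplexPoint_snoc, hw, mul_zero, add_zero, ← integral_smul,
    ← integral_const_mul]
  congr 1 with u
  simp only [Complex.real_smul]
  push_cast
  ring_nf

/-- The node `x_j = γ_{j+1} + ⋯ + γ_q` of the paper; here `γ` is indexed from `0`. -/
def tailSums {q : ℕ} (γ : Fin q → ℂ) (j : Fin (q + 1)) : ℂ :=
  ∑ k : Fin q, if (j : ℕ) ≤ (k : ℕ) then γ k else 0

lemma tailSums_last {q : ℕ} (γ : Fin q → ℂ) : tailSums γ (Fin.last q) = 0 :=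
  Finset.sum_eq_zero fun k _ => if_neg (by simp)

lemma tailSums_castSucc {q : ℕ} (γ : Fin (q + 1) → ℂ) (j : Fin (q + 1)) :
    tailSums γ j.castSucc = tailSums (fun k => γ k.castSucc) j + γ (Fin.last q) := by
  simp only [tailSums, Fin.sum_univ_castSucc, Fin.val_castSucc, Fin.val_last,
    if_pos (Nat.lt_succ_iff.mp j.isLt)]

theorem orderedInt_eq_expDD_general (q : ℕ) (t : ℝ) (γ : Fin q → ℂ) :
    Complex.I ^ q * orderedInt ((List.ofFn γ).reverse) t =
      expDD (t : ℂ) (fun j : Fin (q + 1) =>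
        ∑ k : Fin q, if (j : ℕ) ≤ (k : ℕ) then γ k else 0) := by
  induction q generalizing t with
  | zero => simp [orderedInt, expDD_fin_one]
  | succ q ih =>
    set γ' : Fin q → ℂ := fun k => γ k.castSucc
    have hlist : (List.ofFn γ).reverse = γ (Fin.last q) :: (List.ofFn γ').reverse := by
      rw [List.ofFn_succ', List.concat_eq_append, List.reverse_concat]
    calc I ^ (q + 1) * orderedInt (List.ofFn γ).reverse t
        = ∫ τ in (0 : ℝ)..t,
            I * (exp (I * γ (Fin.last q) * τ) * (I ^ q * orderedInt (List.ofFn γ').reverse τ)) := by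
          rw [hlist, orderedInt, ← intervalIntegral.integral_const_mul]
          congr 1 with τ
          ring
      _ = ∫ τ in (0 : ℝ)..t, I * expDD τ (fun j => tailSums γ' j + γ (Fin.last q)) := by
          simp only [ih, expDD_add_const]
          rfl
      _ = expDD t (tailSums γ) := by
          rw [expDD_eq_integral_expDD_castSucc _ _ (tailSums_last γ)]
          simp only [tailSums_castSucc, γ']

/-- **Time-ordered integral identity**: for `t > 0` and complex `γ₁,…,γ_q`,
`(i)^q ∫₀^t dt_q ⋯ ∫₀^{t₂} dt₁ e^{i(γ_q t_q + ⋯ + γ₁ t₁)} = e^{it[x₀,…,x_{q−1},0]}`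
where `x_j = ∑_{k=j+1}^q γ_k` and the right-hand side is the divided difference of
`x ↦ e^{ixt}` at the indicated nodes. -/
theorem orderedInt_eq_expDD (q : ℕ) (hq : 1 ≤ q) (t : ℝ) (ht : 0 < t)
    (γ : Fin q → ℂ) :
    Complex.I ^ q * orderedInt ((List.ofFn γ).reverse) t =
      expDD (t : ℂ) (fun j : Fin (q + 1) =>
        ∑ k : Fin q, if (j : ℕ) ≤ (k : ℕ) then γ k else 0) :=
  orderedInt_eq_expDD_general q t γ
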